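/- arXiv:math/9805119 — 2 statements merged into one kernel-verified Lean document; each statement's English description precedes it below -/
import Mathlib

section
/- The image B = Π(A) is a unital subalgebra of A: it is a K-submodule containing 1_A and closed under products. Moreover B is a left coideal of A: for every b ∈ B, Δ(b) lies in the submodule A ⊗ B of A ⊗ A. -/
/-!
Write `τ = (id ⊗ π) ∘ Δ : A → A ⊗ H`, an algebra map, and `S = i ∘ κ_H ∘ π`, so that `Π = id * S`
in the convolution algebra of linear maps `A → A`. The image of `Π` is the subalgebra of
coinvariants `{b | τ b = b ⊗ 1}`.

`Π a` is coinvariant: `τ ∘ Π = τ * (τ ∘ S)` and `τ = (· ⊗ 1) * (1 ⊗ π ·)`, while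
`(1 ⊗ π ·) * (τ ∘ S) = (· ⊗ 1) ∘ S` because `(1 ⊗ h₁) Δ(κ h₂) = κ h ⊗ 1` in `H ⊗ H`; the latter
follows from `Δ = (· ⊗ 1) * (1 ⊗ ·)` and `Δ * (Δ ∘ κ) = 1`, so no anti-comultiplicativity of
`κ` is needed. Conversely, coassociativity gives `(id ⊗ Π)(Δ b) = Δ b` for coinvariant `b`;
applying `ε ⊗ id` shows `Π b = b`, and the identity itself shows `Δ b ∈ A ⊗ B`.
-/

open TensorProduct

/-- The projection `Π : A → A` defined by `Π(a) = a₁ · i(κ_H(π(a₂)))` (Sweedler notation),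
for bialgebra homomorphisms `π : A → H` and `i : H → A`. -/
noncomputable def PiMap (K : Type*) {A H : Type*} [CommRing K] [Ring A] [Ring H]
    [HopfAlgebra K A] [HopfAlgebra K H]
    (π : A →ₐc[K] H) (i : H →ₐc[K] A) : A →ₗ[K] A :=
  (LinearMap.mul' K A) ∘ₗ
    (TensorProduct.map LinearMap.id
      ((i : H →ₗ[K] A) ∘ₗ (HopfAlgebra.antipode (R := K) (A := H)) ∘ₗ (π : A →ₗ[K] H))) ∘ₗ
    (Coalgebra.comul (R := K) (A := A))

open Coalgebra WithConv Algebra.TensorProduct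

theorem lTensor_mul'_assoc_tmul_one {K A : Type*} [CommSemiring K] [Semiring A] [Algebra K A]
    (x : A ⊗[K] A) :
    (LinearMap.mul' K A).lTensor A (TensorProduct.assoc K A A A (x ⊗ₜ 1)) = x := by
  induction x using TensorProduct.induction_on with
  | zero => simp
  | tmul x y => simp
  | add x y hx hy => simp only [add_tmul, map_add, hx, hy]

section Bialgebra
variable {K C : Type*} [CommSemiring K] [Semiring C] [Bialgebra K C]

theorem comul_eq_includeLeft_convMul_includeRight :
    toConv (comul : C →ₗ[K] C ⊗[K] C) =
      toConv (includeLeft : C →ₐ[K] C ⊗[K] C).toLinearMap *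
        toConv (includeRight : C →ₐ[K] C ⊗[K] C).toLinearMap := by
  ext c
  rw [(ℛ K c).convMul_apply, ← (ℛ K c).eq]
  simp [tmul_mul_tmul]

variable {H : Type*} [Semiring H] [Bialgebra K H]

noncomputable def rightCoaction (π : C →ₐc[K] H) : C →ₐ[K] C ⊗[K] H :=
  (Algebra.TensorProduct.map (AlgHom.id K C) (π : C →ₐ[K] H)).comp (Bialgebra.comulAlgHom K C)

noncomputable def coinvariants (π : C →ₐc[K] H) : Subalgebra K C :=
  AlgHom.equalizer (rightCoaction π) includeLeft

theorem mem_coinvariants {π : C →ₐc[K] H} {c : C} :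
    c ∈ coinvariants π ↔ rightCoaction π c = c ⊗ₜ 1 :=
  Iff.rfl

theorem toLinearMap_rightCoaction (π : C →ₐc[K] H) :
    (rightCoaction π).toLinearMap = TensorProduct.map LinearMap.id (π : C →ₗ[K] H) ∘ₗ comul :=
  rfl

theorem toConv_rightCoaction (π : C →ₐc[K] H) :
    toConv (rightCoaction π).toLinearMap =
      toConv (includeLeft : C →ₐ[K] C ⊗[K] H).toLinearMap *
        toConv ((includeRight : H →ₐ[K] C ⊗[K] H).toLinearMap ∘ₗ (π : C →ₗ[K] H)) := by
  apply ofConv_injective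
  calc (rightCoaction π).toLinearMap
      = (Algebra.TensorProduct.map (AlgHom.id K C) (π : C →ₐ[K] H)).toLinearMap ∘ₗ
          (toConv (includeLeft : C →ₐ[K] C ⊗[K] C).toLinearMap *
            toConv (includeRight : C →ₐ[K] C ⊗[K] C).toLinearMap).ofConv := by
        rw [← comul_eq_includeLeft_convMul_includeRight]; rfl
    _ = _ := by
        rw [LinearMap.algHom_comp_convMul_distrib]
        congr 3; ext; simp

theorem rightCoaction_comp_section (π : C →ₐc[K] H) (i : H →ₐc[K] C)
    (hπi : π.comp i = BialgHom.id K H) :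
    (rightCoaction π).toLinearMap ∘ₗ (i : H →ₗ[K] C) =
      TensorProduct.map (i : H →ₗ[K] C) LinearMap.id ∘ₗ comul := by
  rw [toLinearMap_rightCoaction, LinearMap.comp_assoc, ← CoalgHomClass.map_comp_comul i,
    ← LinearMap.comp_assoc, ← TensorProduct.map_comp]
  congr 2
  exact congrArg (fun f : H →ₐc[K] H => (f : H →ₗ[K] H)) hπi

end Bialgebra

section Hopf
variable {K H : Type*} [CommSemiring K] [Semiring H] [HopfAlgebra K H]

theorem includeRight_convMul_comul_comp_antipode :
    toConv (includeRight : H →ₐ[K] H ⊗[K] H).toLinearMap *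
        toConv (comul ∘ₗ HopfAlgebra.antipode K) =
      toConv ((includeLeft : H →ₐ[K] H ⊗[K] H).toLinearMap ∘ₗ HopfAlgebra.antipode K) := by
  set l := toConv (includeLeft : H →ₐ[K] H ⊗[K] H).toLinearMap
  set lκ := toConv ((includeLeft : H →ₐ[K] H ⊗[K] H).toLinearMap ∘ₗ HopfAlgebra.antipode K)
  have hl : lκ * l = 1 := by
    have := LinearMap.algHom_comp_convMul_distrib (includeLeft : H →ₐ[K] H ⊗[K] H)
      (toConv (HopfAlgebra.antipode K)) (toConv LinearMap.id)
    rw [LinearMap.antipode_mul_id] at this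
    exact ofConv_injective (this.symm.trans (by ext; simp))
  calc _ = lκ * l * (toConv (includeRight : H →ₐ[K] H ⊗[K] H).toLinearMap *
        toConv (comul ∘ₗ HopfAlgebra.antipode K)) := by rw [hl, one_mul]
    _ = lκ := by
        rw [mul_assoc, ← mul_assoc l, ← comul_eq_includeLeft_convMul_includeRight,
          LinearMap.comul_right_inv, mul_one]

end Hopf

section Projection
variable {K A H : Type*} [CommRing K] [Ring A] [Ring H] [HopfAlgebra K A] [HopfAlgebra K H]
  (π : A →ₐc[K] H) (i : H →ₐc[K] A)

theorem toConv_algHom_comp_PiMap {B : Type*} [Ring B] [Algebra K B] (f : A →ₐ[K] B) :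
    toConv (f.toLinearMap ∘ₗ PiMap K π i) = toConv f.toLinearMap *
      toConv (f.toLinearMap ∘ₗ (i : H →ₗ[K] A) ∘ₗ HopfAlgebra.antipode K ∘ₗ (π : A →ₗ[K] H)) :=
  congrArg toConv (LinearMap.algHom_comp_convMul_distrib f (toConv LinearMap.id) (toConv _))

theorem includeRight_convMul_rightCoaction_comp_antipode (hπi : π.comp i = BialgHom.id K H) :
    toConv (includeRight : H →ₐ[K] A ⊗[K] H).toLinearMap *
        toConv ((rightCoaction π).toLinearMap ∘ₗ (i : H →ₗ[K] A) ∘ₗ HopfAlgebra.antipode K) =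
      toConv ((includeLeft : A →ₐ[K] A ⊗[K] H).toLinearMap ∘ₗ (i : H →ₗ[K] A) ∘ₗ
        HopfAlgebra.antipode K) := by
  set j : H ⊗[K] H →ₐ[K] A ⊗[K] H := Algebra.TensorProduct.map (i : H →ₐ[K] A) (AlgHom.id K H)
  have hR : (includeRight : H →ₐ[K] A ⊗[K] H).toLinearMap =
      j.toLinearMap ∘ₗ (includeRight : H →ₐ[K] H ⊗[K] H).toLinearMap := by
    ext; simp [j]
  have hτ : (rightCoaction π).toLinearMap ∘ₗ (i : H →ₗ[K] A) ∘ₗ HopfAlgebra.antipode K =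
      j.toLinearMap ∘ₗ comul ∘ₗ HopfAlgebra.antipode K := by
    rw [← LinearMap.comp_assoc, rightCoaction_comp_section π i hπi]; rfl
  have hL : (includeLeft : A →ₐ[K] A ⊗[K] H).toLinearMap ∘ₗ (i : H →ₗ[K] A) ∘ₗ
        HopfAlgebra.antipode K =
      j.toLinearMap ∘ₗ (includeLeft : H →ₐ[K] H ⊗[K] H).toLinearMap ∘ₗ
        HopfAlgebra.antipode K := by
    ext; simp [j]
  apply ofConv_injective
  rw [hR, hτ, hL]
  calc _ = j.toLinearMap ∘ₗ (toConv (includeRight : H →ₐ[K] H ⊗[K] H).toLinearMap *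
        toConv (comul ∘ₗ HopfAlgebra.antipode K)).ofConv :=
        (LinearMap.algHom_comp_convMul_distrib j _ _).symm
    _ = _ := by rw [includeRight_convMul_comul_comp_antipode]

theorem rightCoaction_comp_PiMap (hπi : π.comp i = BialgHom.id K H) :
    (rightCoaction π).toLinearMap ∘ₗ PiMap K π i =
      (includeLeft : A →ₐ[K] A ⊗[K] H).toLinearMap ∘ₗ PiMap K π i := by
  set S : A →ₗ[K] A := (i : H →ₗ[K] A) ∘ₗ HopfAlgebra.antipode K ∘ₗ (π : A →ₗ[K] H)
  set τ := (rightCoaction π).toLinearMap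
  set L := (includeLeft : A →ₐ[K] A ⊗[K] H).toLinearMap
  have hRS : toConv ((includeRight : H →ₐ[K] A ⊗[K] H).toLinearMap ∘ₗ (π : A →ₗ[K] H)) *
      toConv (τ ∘ₗ S) = toConv (L ∘ₗ S) := by
    have := LinearMap.convMul_comp_coalgHom_distrib
      (toConv (includeRight : H →ₐ[K] A ⊗[K] H).toLinearMap)
      (toConv (τ ∘ₗ (i : H →ₗ[K] A) ∘ₗ HopfAlgebra.antipode K)) (π : A →ₗc[K] H)
    rw [includeRight_convMul_rightCoaction_comp_antipode π i hπi] at this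
    exact ofConv_injective this.symm
  apply toConv_injective
  calc toConv (τ ∘ₗ PiMap K π i)
      = toConv τ * toConv (τ ∘ₗ S) := toConv_algHom_comp_PiMap π i _
    _ = toConv L * toConv (L ∘ₗ S) := by
        rw [toConv_rightCoaction, mul_assoc, hRS]
    _ = toConv (L ∘ₗ PiMap K π i) := (toConv_algHom_comp_PiMap π i _).symm

theorem lTensor_PiMap_comp_comul :
    (PiMap K π i).lTensor A ∘ₗ comul =
      (LinearMap.mul' K A).lTensor A ∘ₗ (TensorProduct.assoc K A A A).toLinearMap ∘ₗ
        TensorProduct.map comul ((i : H →ₗ[K] A) ∘ₗ HopfAlgebra.antipode K) ∘ₗ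
        (rightCoaction π).toLinearMap := by
  rw [toLinearMap_rightCoaction]
  simp only [PiMap, coassoc_simps]

theorem lTensor_PiMap_comul_of_mem_coinvariants {b : A} (hb : b ∈ coinvariants π) :
    (PiMap K π i).lTensor A (comul b) = comul b := by
  have h := LinearMap.congr_fun (lTensor_PiMap_comp_comul π i) b
  simp only [LinearMap.comp_apply, AlgHom.toLinearMap_apply, mem_coinvariants.1 hb,
    TensorProduct.map_tmul, HopfAlgebra.antipode_one, LinearMap.coe_coe, map_one,
    LinearEquiv.coe_coe] at h
  rw [h, lTensor_mul'_assoc_tmul_one]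

theorem PiMap_eq_self_of_mem_coinvariants {b : A} (hb : b ∈ coinvariants π) :
    PiMap K π i b = b := by
  calc PiMap K π i b
      = TensorProduct.lid K A (counit.rTensor A ((PiMap K π i).lTensor A (comul b))) := by
        rw [← LinearMap.comp_apply (counit.rTensor A), LinearMap.rTensor_comp_lTensor,
          ← LinearMap.lTensor_comp_rTensor, LinearMap.comp_apply, rTensor_counit_comul]
        simp
    _ = b := by
        rw [lTensor_PiMap_comul_of_mem_coinvariants π i hb, rTensor_counit_comul,
          TensorProduct.lid_tmul, one_smul]

theorem range_PiMap (hπi : π.comp i = BialgHom.id K H) :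
    LinearMap.range (PiMap K π i) = Subalgebra.toSubmodule (coinvariants π) := by
  refine le_antisymm ?_ fun b hb => ⟨b, PiMap_eq_self_of_mem_coinvariants π i hb⟩
  rintro _ ⟨a, rfl⟩
  exact mem_coinvariants.2 (LinearMap.congr_fun (rightCoaction_comp_PiMap π i hπi) a)

theorem comul_mem_range_lTensor_of_mem_coinvariants {b : A} (hb : b ∈ coinvariants π) :
    comul b ∈ LinearMap.range (LinearMap.lTensor A (LinearMap.range (PiMap K π i)).subtype) := by
  refine ⟨(PiMap K π i).rangeRestrict.lTensor A (comul b), ?_⟩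
  rw [← LinearMap.comp_apply, ← LinearMap.lTensor_comp, LinearMap.subtype_comp_codRestrict]
  exact lTensor_PiMap_comul_of_mem_coinvariants π i hb

end Projection

/-- `B = Π(A)` (a `K`-submodule of `A`, being the range of the linear map `Π`)
is a unital subalgebra of `A` (it contains `1` and is closed under products), and it is a
left coideal: `Δ(b) ∈ A ⊗ B` for every `b ∈ B`. -/
theorem statement1 (K A H : Type*) [CommRing K] [Ring A] [Ring H]
    [HopfAlgebra K A] [HopfAlgebra K H]
    (π : A →ₐc[K] H) (i : H →ₐc[K] A)
    (hπi : π.comp i = BialgHom.id K H) :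
    (1 : A) ∈ LinearMap.range (PiMap K π i) ∧
    (∀ b b' : A, b ∈ LinearMap.range (PiMap K π i) → b' ∈ LinearMap.range (PiMap K π i) →
        b * b' ∈ LinearMap.range (PiMap K π i)) ∧
    (∀ b : A, b ∈ LinearMap.range (PiMap K π i) →
        Coalgebra.comul (R := K) b ∈
          LinearMap.range
            (LinearMap.lTensor A (LinearMap.range (PiMap K π i)).subtype)) := by
  have hB := range_PiMap π i hπi
  refine ⟨?_, fun b b' hb hb' => ?_, fun b hb => ?_⟩
  · rw [hB]
    exact (coinvariants π).one_mem
  · rw [hB] at hb hb' ⊢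
    exact (coinvariants π).mul_mem hb hb'
  · rw [hB] at hb
    exact comul_mem_range_lTensor_of_mem_coinvariants π i hb
end

section
/- The partial trace of the braiding array Λ over its second composite index pair collapses to Kronecker deltas: for all a₁,a₂,b₁,b₂,c₁,c₂ ∈ {1,…,N}, Σ_b Λ_{c₁}{}^{c₂}{}_{b}{}^{b}|^{a₁}{}_{a₂}{}^{b₁}{}_{b₂} = δ^{a₁}_{a₂} δ^{b₁}_{c₁} δ^{c₂}_{b₂}; explicitly, Σ_{b,e,f,g,h} d^{f} (d^{a₂})⁻¹ R^{f b₁}_{a₂ g} (R⁻¹)^{a₁ g}_{e c₁} (R⁻¹)^{c₂ e}_{h b} R^{h b}_{b₂ f} = δ^{a₁}_{a₂} δ^{b₁}_{c₁} δ^{c₂}_{b₂}. -/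
open Finset

/-- Kronecker delta with values in `ℂ`. -/
def kd {α : Type*} [DecidableEq α] (a b : α) : ℂ := if a = b then 1 else 0

/-- The multiparametric `GL_{q,r}(N)` R-matrix.  Indices are 0-based: the paper index
`A ∈ {1,…,N}` corresponds to `A.val + 1`.
`R^{AB}_{CD} = δ^A_C δ^B_D (r/q_{AB} + (r−1)δ^{AB}) + (r−r⁻¹) δ^A_D δ^B_C θ^{AB}`,
with `θ^{AB} = 1` iff `A > B`. -/
noncomputable def Rgl (N : ℕ) (r : ℂ) (q : Fin N → Fin N → ℂ)
    (A B C D : Fin N) : ℂ :=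
  kd A C * kd B D * (r / q A B + (r - 1) * kd A B)
    + (r - r⁻¹) * kd A D * kd B C * (if B < A then 1 else 0)

/-- The R-matrix with all deformation parameters inverted: `R_{q⁻¹,r⁻¹}`. -/
noncomputable def RglInv (N : ℕ) (r : ℂ) (q : Fin N → Fin N → ℂ)
    (A B C D : Fin N) : ℂ :=
  Rgl N r⁻¹ (fun a b => (q a b)⁻¹) A B C D

/-- Entries of the diagonal matrix `D`: `d^A = r^{2A−1}` (paper index `A = i + 1` for the
0-based index `i`). -/
noncomputable def dgl (r : ℂ) (i : ℕ) : ℂ := r ^ (2 * i + 1)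

/-- The braiding array `Λ` of the bicovariant differential calculus on `GL_{q,r}(N)`:
`Λ_{a₁}{}^{a₂}{}_{d₁}{}^{d₂}|^{c₁}{}_{c₂}{}^{b₁}{}_{b₂}
  = Σ_{e,f,g,h} d^f (d^{c₂})⁻¹ R^{f b₁}_{c₂ g} (R⁻¹)^{c₁ g}_{e a₁}
      (R⁻¹)^{a₂ e}_{h d₁} R^{h d₂}_{b₂ f}`. -/
noncomputable def LamGL (N : ℕ) (r : ℂ) (q : Fin N → Fin N → ℂ)
    (a₁ a₂ d₁ d₂ c₁ c₂ b₁ b₂ : Fin N) : ℂ :=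
  ∑ e : Fin N, ∑ f : Fin N, ∑ g : Fin N, ∑ h : Fin N,
    dgl r f.val * (dgl r c₂.val)⁻¹ * Rgl N r q f b₁ c₂ g * RglInv N r q c₁ g e a₁ *
      RglInv N r q a₂ e h d₁ * Rgl N r q h d₂ b₂ f

/-!
Summing over `b` contracts the last two factors of `Λ` into `R_{q⁻¹,r⁻¹} R = 1`, which forces
`c₂ = b₂` and `e = f`. What is left is the `D`-twisted partial trace
`Σ_{e,g} d^e R^{e b₁}_{a₂ g} (R⁻¹)^{a₁ g}_{e c₁}`. Its diagonal part is
`d^{a₂} δ^{a₁}_{a₂} δ^{b₁}_{c₁}` because the diagonal coefficients of `R` and `R⁻¹` are mutually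
inverse; its `θ`-parts all carry `δ^{b₁}_{a₂} δ^{a₁}_{c₁}` and cancel, since
`(r - r⁻¹) Σ_{B < e < A} d^e = r⁻¹ d^A - r d^B` telescopes for `d^e = r^{2e+1}`.
-/

@[simp] theorem kd_self {α : Type*} [DecidableEq α] (a : α) : kd a a = 1 := if_pos rfl

theorem kd_comm {α : Type*} [DecidableEq α] (a b : α) : kd a b = kd b a := by
  simp [kd, eq_comm]

theorem sum_kd_mul {α : Type*} [Fintype α] [DecidableEq α] (a : α) (f : α → ℂ) :
    ∑ x, kd a x * f x = f a := by
  simp [kd]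

section

variable {N : ℕ}

noncomputable def RglDiag (r : ℂ) (q : Fin N → Fin N → ℂ) (A B : Fin N) : ℂ :=
  r / q A B + (r - 1) * kd A B

theorem Rgl_apply (r : ℂ) (q : Fin N → Fin N → ℂ) (A B C D : Fin N) :
    Rgl N r q A B C D = kd A C * kd B D * RglDiag r q A B
      + (r - r⁻¹) * kd A D * kd B C * (if B < A then 1 else 0) := rfl

theorem RglInv_apply (r : ℂ) (q : Fin N → Fin N → ℂ) (A B C D : Fin N) :
    RglInv N r q A B C D = kd A C * kd B D * RglDiag r⁻¹ (fun a b => (q a b)⁻¹) A B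
      + (r⁻¹ - r) * kd A D * kd B C * (if B < A then 1 else 0) := by
  rw [RglInv, Rgl_apply, inv_inv]

theorem sum_sum_Rgl_mul (r : ℂ) (q : Fin N → Fin N → ℂ) (A B : Fin N)
    (X : Fin N → Fin N → ℂ) :
    ∑ C, ∑ D, Rgl N r q A B C D * X C D
      = RglDiag r q A B * X A B + (r - r⁻¹) * (if B < A then 1 else 0) * X B A := by
  simp [Rgl_apply, kd, add_mul, Finset.sum_add_distrib, ite_mul]

theorem sum_Rgl_mul (r : ℂ) (q : Fin N → Fin N → ℂ) (A B C : Fin N) (Y : Fin N → ℂ) :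
    ∑ D, Rgl N r q A B C D * Y D
      = kd A C * RglDiag r q A B * Y B
        + (r - r⁻¹) * kd B C * (if B < A then 1 else 0) * Y A := by
  simp [Rgl_apply, kd, add_mul, Finset.sum_add_distrib, ite_mul]

theorem sub_inv_mul_sum_Ioo_dgl {r : ℂ} (hr : r ≠ 0) {i j : ℕ} (hij : i < j) :
    (r - r⁻¹) * ∑ m ∈ Finset.Ioo i j, dgl r m = r⁻¹ * dgl r j - r * dgl r i := by
  induction j, hij using Nat.le_induction with
  | base =>
    rw [Nat.succ_eq_add_one, Finset.Ioo_add_one_right_eq_Ioc, Finset.Ioc_self, Finset.sum_empty,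
      dgl, dgl]
    field_simp
    ring
  | succ j hij ih =>
    rw [Finset.Ioo_add_one_right_eq_Ioc, ← Finset.Ioo_insert_right hij,
      Finset.sum_insert Finset.right_notMem_Ioo, mul_add, ih, dgl, dgl, dgl]
    field_simp
    ring

theorem sub_inv_mul_sum_dgl_between {r : ℂ} (hr : r ≠ 0) {a b : Fin N} (hba : b < a) :
    (r - r⁻¹) * ∑ e : Fin N, (if b < e then 1 else 0) * (if e < a then 1 else 0) * dgl r e
      = r⁻¹ * dgl r a - r * dgl r b := by
  have hIoo : ∑ e : Fin N, (if b < e then 1 else 0) * (if e < a then 1 else 0) * dgl r e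
      = ∑ e ∈ Finset.Ioo b a, dgl r e := by
    simp only [one_mul, ite_mul, zero_mul, ← Finset.sum_filter]
    congr 1
    ext
    simp
  have hnat := sub_inv_mul_sum_Ioo_dgl hr hba
  rw [← Fin.map_valEmbedding_Ioo, Finset.sum_map] at hnat
  rwa [hIoo]

section Relations

variable {r : ℂ} {q : Fin N → Fin N → ℂ}

theorem q_ne_zero (hr : r ≠ 0) (hqBA : ∀ A B, q B A * q A B = r ^ 2) (A B : Fin N) :
    q A B ≠ 0 :=
  right_ne_zero_of_mul (by rw [hqBA]; exact pow_ne_zero 2 hr)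

theorem RglDiag_self (hr : r ≠ 0) (hqAA : ∀ A, q A A = r) (A : Fin N) :
    RglDiag r q A A = r := by
  simp [RglDiag, hqAA, hr]

theorem RglDiag_inv_self (hr : r ≠ 0) (hqAA : ∀ A, q A A = r) (A : Fin N) :
    RglDiag r⁻¹ (fun a b => (q a b)⁻¹) A A = r⁻¹ := by
  simp [RglDiag, hqAA, hr]

theorem RglDiag_mul_RglDiag_inv (hr : r ≠ 0) (hqAA : ∀ A, q A A = r)
    (hqBA : ∀ A B, q B A * q A B = r ^ 2) (A B : Fin N) :
    RglDiag r q A B * RglDiag r⁻¹ (fun a b => (q a b)⁻¹) A B = 1 := by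
  obtain rfl | hAB := eq_or_ne A B
  · rw [RglDiag_self hr hqAA, RglDiag_inv_self hr hqAA, mul_inv_cancel₀ hr]
  · have hqAB := q_ne_zero hr hqBA A B
    simp only [RglDiag, kd, hAB, if_false, mul_zero, add_zero, div_inv_eq_mul]
    field_simp

theorem RglDiag_swap (hr : r ≠ 0) (hqBA : ∀ A B, q B A * q A B = r ^ 2) {A B : Fin N}
    (hAB : A ≠ B) : RglDiag r q B A = RglDiag r⁻¹ (fun a b => (q a b)⁻¹) A B := by
  have hqAB := q_ne_zero hr hqBA A B
  simp only [RglDiag, kd, hAB, hAB.symm, if_false, mul_zero, add_zero, div_inv_eq_mul]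
  rw [div_eq_iff (q_ne_zero hr hqBA B A)]
  field_simp
  linear_combination -hqBA A B

theorem sum_RglInv_mul_Rgl (hr : r ≠ 0) (hqAA : ∀ A, q A A = r)
    (hqBA : ∀ A B, q B A * q A B = r ^ 2) (A B E F : Fin N) :
    ∑ C, ∑ D, RglInv N r q A B C D * Rgl N r q C D E F = kd A E * kd B F := by
  have hdiag := RglDiag_mul_RglDiag_inv hr hqAA hqBA A B
  unfold RglInv
  rw [sum_sum_Rgl_mul, Rgl_apply, Rgl_apply, inv_inv]
  by_cases hBA : B < A
  · rw [if_pos hBA, if_neg (asymm hBA), RglDiag_swap hr hqBA hBA.ne', kd_comm B E]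
    linear_combination kd A E * kd B F * hdiag
  · rw [if_neg hBA]
    linear_combination kd A E * kd B F * hdiag

theorem RglInv_apply_mid (hr : r ≠ 0) (hqAA : ∀ A, q A A = r) (a e c : Fin N) :
    RglInv N r q a e e c = kd a c * (kd a e * r⁻¹ + (r⁻¹ - r) * (if e < a then 1 else 0)) := by
  rw [RglInv_apply]
  obtain rfl | h := eq_or_ne a e
  · simp [RglDiag_inv_self hr hqAA, kd_comm a c]
  · simp [kd, h]

theorem sum_dgl_mul_RglInv_apply_mid (hr : r ≠ 0) (hqAA : ∀ A, q A A = r) (a b c : Fin N) :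
    ∑ e, (if b < e then 1 else 0) * dgl r e * RglInv N r q a e e c
      = kd a c * (if b < a then 1 else 0) * (r * dgl r b) := by
  calc ∑ e, (if b < e then 1 else 0) * dgl r e * RglInv N r q a e e c
      = ∑ e, kd a c * (r⁻¹ * (kd a e * ((if b < e then 1 else 0) * dgl r e))
          + (r⁻¹ - r) * ((if b < e then 1 else 0) * (if e < a then 1 else 0) * dgl r e)) :=
        Finset.sum_congr rfl fun e _ => by rw [RglInv_apply_mid hr hqAA]; ring
    _ = kd a c * (r⁻¹ * ((if b < a then 1 else 0) * dgl r a) + (r⁻¹ - r) *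
          ∑ e : Fin N, (if b < e then 1 else 0) * (if e < a then 1 else 0) * dgl r e) := by
        rw [← Finset.mul_sum, Finset.sum_add_distrib, ← Finset.mul_sum, ← Finset.mul_sum,
          sum_kd_mul]
    _ = kd a c * (if b < a then 1 else 0) * (r * dgl r b) := by
        obtain hba | hab := lt_or_ge b a
        · rw [if_pos hba]
          linear_combination (-kd a c) * sub_inv_mul_sum_dgl_between hr hba
        · have hempty : ∀ e : Fin N,
              (if b < e then 1 else 0) * (if e < a then 1 else 0) = (0 : ℂ) := fun e => by
            split_ifs with hbe hea
            · exact absurd (hbe.trans hea) (not_lt.mpr hab)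
            all_goals simp
          simp [not_lt.mpr hab, hempty]

theorem sum_dgl_mul_sum_Rgl_mul_RglInv (hr : r ≠ 0) (hqAA : ∀ A, q A A = r)
    (hqBA : ∀ A B, q B A * q A B = r ^ 2) (a₁ a₂ b₁ c₁ : Fin N) :
    ∑ e : Fin N, dgl r e * ∑ g, Rgl N r q e b₁ a₂ g * RglInv N r q a₁ g e c₁
      = dgl r a₂ * kd a₁ a₂ * kd b₁ c₁ := by
  have hdiag : kd a₁ a₂ * (RglDiag r q a₂ b₁ * RglDiag r⁻¹ (fun a b => (q a b)⁻¹) a₁ b₁)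
      = kd a₁ a₂ := by
    obtain rfl | h := eq_or_ne a₁ a₂
    · rw [RglDiag_mul_RglDiag_inv hr hqAA hqBA, mul_one]
    · simp [kd, h]
  have hcross : kd b₁ a₂ * (dgl r a₂ * RglDiag r q a₂ b₁) = kd b₁ a₂ * (r * dgl r b₁) := by
    obtain rfl | h := eq_or_ne b₁ a₂
    · rw [RglDiag_self hr hqAA, mul_comm (dgl r _)]
    · simp [kd, h]
  calc ∑ e : Fin N, dgl r e * ∑ g, Rgl N r q e b₁ a₂ g * RglInv N r q a₁ g e c₁
      = dgl r a₂ * RglDiag r q a₂ b₁ * RglInv N r q a₁ b₁ a₂ c₁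
        + (r - r⁻¹) * kd b₁ a₂ *
          ∑ e, (if b₁ < e then 1 else 0) * dgl r e * RglInv N r q a₁ e e c₁ := by
        simp only [sum_Rgl_mul, mul_add, Finset.sum_add_distrib, Finset.mul_sum]
        congr 1
        · simp_rw [kd_comm _ a₂, ← mul_assoc, mul_comm (dgl r _) (kd a₂ _), mul_assoc, sum_kd_mul]
        · exact Finset.sum_congr rfl fun e _ => by ring
    _ = dgl r a₂ * kd a₁ a₂ * kd b₁ c₁ := by
        rw [sum_dgl_mul_RglInv_apply_mid hr hqAA, RglInv_apply]
        linear_combination dgl r a₂ * kd b₁ c₁ * hdiag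
          + ((r⁻¹ - r) * kd a₁ c₁ * if b₁ < a₁ then 1 else 0) * hcross

end Relations

theorem sum_LamGL_trace (r : ℂ) (q : Fin N → Fin N → ℂ) (a₁ a₂ b₁ b₂ c₁ c₂ : Fin N) :
    ∑ b, LamGL N r q c₁ c₂ b b a₁ a₂ b₁ b₂
      = ∑ e, ∑ f, (∑ h, ∑ b, RglInv N r q c₂ e h b * Rgl N r q h b b₂ f)
          * ((dgl r a₂)⁻¹ * (dgl r f * ∑ g, Rgl N r q f b₁ a₂ g * RglInv N r q a₁ g e c₁)) := by
  simp only [LamGL, Finset.sum_mul, Finset.mul_sum]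
  rw [Finset.sum_comm]; refine Finset.sum_congr rfl fun e _ => ?_
  rw [Finset.sum_comm]; refine Finset.sum_congr rfl fun f _ => ?_
  rw [Finset.sum_comm]; refine Finset.sum_congr rfl fun g _ => ?_
  rw [Finset.sum_comm]; refine Finset.sum_congr rfl fun h _ => ?_
  exact Finset.sum_congr rfl fun b _ => by ring

end

theorem statement11_general (N : ℕ) (r : ℂ) (hr : r ≠ 0)
    (q : Fin N → Fin N → ℂ)
    (hqAA : ∀ A, q A A = r) (hqBA : ∀ A B, q B A * q A B = r ^ 2) :
    ∀ a₁ a₂ b₁ b₂ c₁ c₂ : Fin N,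
      (∑ b : Fin N, LamGL N r q c₁ c₂ b b a₁ a₂ b₁ b₂)
        = kd a₁ a₂ * kd b₁ c₁ * kd c₂ b₂ := by
  intro a₁ a₂ b₁ b₂ c₁ c₂
  rw [sum_LamGL_trace]
  simp only [sum_RglInv_mul_Rgl hr hqAA hqBA, mul_assoc, ← Finset.mul_sum, sum_kd_mul]
  rw [sum_dgl_mul_sum_Rgl_mul_RglInv hr hqAA hqBA]
  have hd : dgl r a₂ ≠ 0 := pow_ne_zero _ hr
  field_simp

/-- the partial trace of the braiding array `Λ` over its second composite
index pair collapses to Kronecker deltas: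
`Σ_b Λ_{c₁}{}^{c₂}{}_{b}{}^{b}|^{a₁}{}_{a₂}{}^{b₁}{}_{b₂} = δ^{a₁}_{a₂} δ^{b₁}_{c₁} δ^{c₂}_{b₂}`. -/
theorem statement11 (N : ℕ) (hN : 1 ≤ N) (r : ℂ) (hr : r ≠ 0)
    (q : Fin N → Fin N → ℂ) (hq0 : ∀ A B, q A B ≠ 0)
    (hqAA : ∀ A, q A A = r) (hqBA : ∀ A B, q B A * q A B = r ^ 2) :
    ∀ a₁ a₂ b₁ b₂ c₁ c₂ : Fin N,
      (∑ b : Fin N, LamGL N r q c₁ c₂ b b a₁ a₂ b₁ b₂)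
        = kd a₁ a₂ * kd b₁ c₁ * kd c₂ b₂ :=
  statement11_general N r hr q hqAA hqBA
end
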